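/- arXiv:2605.23336 — 2 statements merged into one kernel-verified Lean document; each statement's English description precedes it below -/
import Mathlib

section
/- Let f : {0,1}^n → {0,1} be a symmetric Boolean function with alternation number alt(f). Then N(f) ≥ alt(f)/2, where N(f) is the 1/3-approximate non-deterministic degree of f. -/
open MvPolynomial

noncomputable section

/-- Real value of a Boolean. -/
def bval (b : Bool) : ℝ := if b then 1 else 0

/-- Evaluate a real multivariate polynomial at a Boolean point. -/
def evalB {ι : Type*} (p : MvPolynomial ι ℝ) (x : ι → Bool) : ℝ :=
  MvPolynomial.eval (fun i => bval (x i)) p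

/-- `p` is an `ε`-approximate non-deterministic polynomial for `f`. -/
def IsApproxNdet {ι : Type*} (ε : ℝ) (f : (ι → Bool) → Bool)
    (p : MvPolynomial ι ℝ) : Prop :=
  ∀ x, (f x = false → |evalB p x| ≤ ε) ∧ (f x = true → 1 ≤ |evalB p x|)

/-- The `ε`-approximate non-deterministic degree `N_ε(f)`. -/
def approxNdeg {ι : Type*} (ε : ℝ) (f : (ι → Bool) → Bool) : ℕ :=
  sInf {d | ∃ p : MvPolynomial ι ℝ, IsApproxNdet ε f p ∧ p.totalDegree ≤ d}

/-- `N(f) = N_{1/3}(f)`. -/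
def N13 {ι : Type*} (f : (ι → Bool) → Bool) : ℕ := approxNdeg (1/3) f

/-- `M(f) = max{N(f), N(¬f)}`. -/
def M13 {ι : Type*} (f : (ι → Bool) → Bool) : ℕ :=
  max (N13 f) (N13 fun x => !(f x))

/-- `p` sign-represents `f`. -/
def SignRep {ι : Type*} (p : MvPolynomial ι ℝ) (f : (ι → Bool) → Bool) : Prop :=
  ∀ x, evalB p x < 0 ↔ f x = true

/-- Sign degree (threshold degree). -/
def signDeg {ι : Type*} (f : (ι → Bool) → Bool) : ℕ :=
  sInf {d | ∃ p : MvPolynomial ι ℝ, SignRep p f ∧ p.totalDegree ≤ d}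

/-- `1/3`-approximate degree. -/
def approxDeg {ι : Type*} (f : (ι → Bool) → Bool) : ℕ :=
  sInf {d | ∃ p : MvPolynomial ι ℝ,
    (∀ x, |evalB p x - bval (f x)| ≤ 1/3) ∧ p.totalDegree ≤ d}

/-- Exact degree of a Boolean function. -/
def degB {ι : Type*} (f : (ι → Bool) → Bool) : ℕ :=
  sInf {d | ∃ p : MvPolynomial ι ℝ,
    (∀ x, evalB p x = bval (f x)) ∧ p.totalDegree ≤ d}

/-- Hamming weight. -/
def wt {ι : Type*} [Fintype ι] (x : ι → Bool) : ℕ :=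
  (Finset.univ.filter fun i => x i = true).card

/-- Flip the bits of `x` inside the block `B`. -/
def flipB {ι : Type*} [DecidableEq ι] (x : ι → Bool) (B : Finset ι) : ι → Bool :=
  fun i => if i ∈ B then !(x i) else x i

/-- Sensitivity of `f` at `x`. -/
def sensAt {ι : Type*} [Fintype ι] [DecidableEq ι]
    (f : (ι → Bool) → Bool) (x : ι → Bool) : ℕ :=
  (Finset.univ.filter fun i : ι => f (flipB x {i}) ≠ f x).card

/-- Sensitivity of `f`. -/
def sens {ι : Type*} [Fintype ι] [DecidableEq ι] (f : (ι → Bool) → Bool) : ℕ :=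
  sSup {s | ∃ x, sensAt f x = s}

/-- 0-sensitivity. -/
def sens₀ {ι : Type*} [Fintype ι] [DecidableEq ι] (f : (ι → Bool) → Bool) : ℕ :=
  sSup {s | ∃ x, f x = false ∧ sensAt f x = s}

/-- 1-sensitivity. -/
def sens₁ {ι : Type*} [Fintype ι] [DecidableEq ι] (f : (ι → Bool) → Bool) : ℕ :=
  sSup {s | ∃ x, f x = true ∧ sensAt f x = s}

/-- Block sensitivity of `f`. -/
def blockSens {ι : Type*} [Fintype ι] [DecidableEq ι] (f : (ι → Bool) → Bool) : ℕ :=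
  sSup {k | ∃ x, ∃ B : Fin k → Finset ι,
    (∀ i j, i ≠ j → Disjoint (B i) (B j)) ∧ ∀ i, f (flipB x (B i)) ≠ f x}

/-- `S` is a certificate for `f` at `x`. -/
def IsCert {ι : Type*} (f : (ι → Bool) → Bool) (x : ι → Bool) (S : Finset ι) : Prop :=
  ∀ y, (∀ i ∈ S, y i = x i) → f y = f x

/-- Certificate complexity at `x`. -/
def certAt {ι : Type*} (f : (ι → Bool) → Bool) (x : ι → Bool) : ℕ :=
  sInf {c | ∃ S : Finset ι, IsCert f x S ∧ S.card ≤ c}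

/-- Certificate complexity of `f`. -/
def cert {ι : Type*} (f : (ι → Bool) → Bool) : ℕ :=
  sSup {c | ∃ x, certAt f x = c}

/-- Deterministic decision trees querying variables indexed by `ι`. -/
inductive DTree (ι : Type*) where
  | leaf : Bool → DTree ι
  | node : ι → DTree ι → DTree ι → DTree ι

def DTree.evalT {ι : Type*} : DTree ι → (ι → Bool) → Bool
  | .leaf b, _ => b
  | .node i t0 t1, x => if x i then t1.evalT x else t0.evalT x

def DTree.depth {ι : Type*} : DTree ι → ℕ
  | .leaf _ => 0
  | .node _ t0 t1 => 1 + max t0.depth t1.depth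

/-- Deterministic query complexity `D(f)`. -/
def Dquery {ι : Type*} (f : (ι → Bool) → Bool) : ℕ :=
  sInf {d | ∃ t : DTree ι, (∀ x, t.evalT x = f x) ∧ t.depth ≤ d}

/-- `P` is a monotone path from `0^n` to `1^n`. -/
def IsMonoPath {ι : Type*} [Fintype ι] [DecidableEq ι] (P : ℕ → ι → Bool) : Prop :=
  P 0 = (fun _ => false) ∧ P (Fintype.card ι) = (fun _ => true) ∧
  ∀ t < Fintype.card ι, ∃ j, P t j = false ∧ P (t + 1) = Function.update (P t) j true

/-- Alternation number of `f` along the path `P`. -/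
def pathAlt {ι : Type*} [Fintype ι] (f : (ι → Bool) → Bool) (P : ℕ → ι → Bool) : ℕ :=
  ((Finset.range (Fintype.card ι)).filter fun t => f (P t) ≠ f (P (t + 1))).card

/-- Alternation number of `f`. -/
def altNum {ι : Type*} [Fintype ι] [DecidableEq ι] (f : (ι → Bool) → Bool) : ℕ :=
  sSup {a | ∃ P, IsMonoPath P ∧ pathAlt f P = a}

/-- Zebra function: all monotone paths have the same alternation number. -/
def IsZebra {ι : Type*} [Fintype ι] [DecidableEq ι] (f : (ι → Bool) → Bool) : Prop :=
  ∀ P Q, IsMonoPath P → IsMonoPath Q → pathAlt f P = pathAlt f Q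

/-- Symmetric Boolean function. -/
def IsSymmF {ι : Type*} [Fintype ι] (f : (ι → Bool) → Bool) : Prop :=
  ∀ x y, wt x = wt y → f x = f y

/-- Monotonically increasing. -/
def MonoIncr {ι : Type*} (f : (ι → Bool) → Bool) : Prop :=
  ∀ x y : ι → Bool, (∀ i, x i = true → y i = true) → f x = true → f y = true

/-- Monotonically decreasing. -/
def MonoDecr {ι : Type*} (f : (ι → Bool) → Bool) : Prop :=
  ∀ x y : ι → Bool, (∀ i, x i = true → y i = true) → f y = true → f x = true

/-- Monotone (increasing or decreasing). -/
def Monot {ι : Type*} (f : (ι → Bool) → Bool) : Prop := MonoIncr f ∨ MonoDecr f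

/-- Non-constant. -/
def NonConst {ι : Type*} (f : (ι → Bool) → Bool) : Prop := ∃ x y, f x ≠ f y

end

/-!
Take a `1/3`-approximate non-deterministic polynomial `p` for `f` of degree `N(f)`. Averaging
`p²` over the layer of Hamming weight `k` gives the value at `k` of a univariate polynomial `Q`
with `deg Q ≤ 2 N(f)`: a monomial in `s` distinct variables averages to
`k(k-1)⋯(k-s+1) / n(n-1)⋯(n-s+1)`. As `f` is symmetric, `p² ≥ 1` on a whole layer where
`f = 1` and `p² ≤ 1/9` on a whole layer where `f = 0`, so `Q - 1/2` changes sign between `k`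
and `k + 1` at every alternation of `f` and has a root in each of these disjoint intervals.
-/

open Finset Polynomial

lemma choose_sub_mul_descFactorial {n k s : ℕ} (hsk : s ≤ k) :
    (n - s).choose (k - s) * n.descFactorial s = n.choose k * k.descFactorial s := by
  rw [Nat.descFactorial_eq_factorial_mul_choose, Nat.descFactorial_eq_factorial_mul_choose,
    mul_left_comm (n.choose k), Nat.choose_mul hsk]
  ring

lemma card_support_le_sum {ι : Type*} (m : ι →₀ ℕ) : #m.support ≤ m.sum fun _ e => e := by
  rw [card_eq_sum_ones, Finsupp.sum]
  exact sum_le_sum fun i hi => Nat.one_le_iff_ne_zero.mpr (Finsupp.mem_support_iff.mp hi)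

section Weight

variable {ι : Type*} [Fintype ι]

lemma wt_le_card (x : ι → Bool) : wt x ≤ Fintype.card ι := card_le_univ _

variable [DecidableEq ι]

lemma wt_decide_mem (T : Finset ι) : wt (fun i => decide (i ∈ T)) = #T := by
  simp [wt]

lemma wt_update_true {x : ι → Bool} {j : ι} (hj : x j = false) :
    wt (Function.update x j true) = wt x + 1 := by
  have : univ.filter (fun i => Function.update x j true i = true) =
      insert j (univ.filter fun i => x i = true) := by
    ext i
    by_cases hij : i = j <;> simp [hij]
  rw [wt, this, card_insert_of_notMem (by simp [hj]), wt]

lemma IsMonoPath.wt_eq {P : ℕ → ι → Bool} (hP : IsMonoPath P) {t : ℕ}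
    (ht : t ≤ Fintype.card ι) : wt (P t) = t := by
  induction t with
  | zero => simp [hP.1, wt]
  | succ t ih =>
    obtain ⟨j, hj, hstep⟩ := hP.2.2 t ht
    rw [hstep, wt_update_true hj, ih (by omega)]

variable (ι) in
def layer (k : ℕ) : Finset (ι → Bool) := {x | wt x = k}

lemma mem_layer {k : ℕ} {x : ι → Bool} : x ∈ layer ι k ↔ wt x = k := by
  simp [layer]

lemma card_filter_layer_forall_true {k : ℕ} {S : Finset ι} (hS : #S ≤ k) :
    #{x ∈ layer ι k | ∀ i ∈ S, x i = true} = (Fintype.card ι - #S).choose (k - #S) := by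
  rw [← card_compl, ← card_powersetCard]
  refine card_nbij' (fun x => ({i | x i = true} : Finset ι) \ S)
    (fun U i => decide (i ∈ S ∪ U)) (fun x hx => ?_) (fun U hU => ?_) (fun x hx => ?_)
    (fun U hU => ?_)
  all_goals simp only [coe_filter, mem_layer, Set.mem_ofPred_eq, mem_coe, mem_powersetCard,
    subset_compl_iff_disjoint_left] at *
  · have hsub : S ⊆ ({i | x i = true} : Finset ι) := fun i hi => by simpa using hx.2 i hi
    refine ⟨disjoint_sdiff, ?_⟩
    rw [card_sdiff_of_subset hsub]
    exact congrArg (· - #S) hx.1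
  · refine ⟨?_, fun i hi => by simp [hi]⟩
    rw [wt_decide_mem, card_union_of_disjoint hU.1]
    omega
  · funext i
    by_cases hi : i ∈ S <;> simp [hi, hx.2]
  · ext i
    have : i ∈ S → i ∉ U := fun h => disjoint_left.1 hU.1 h
    simp only [mem_sdiff, mem_filter, mem_univ, true_and, decide_eq_true_eq, mem_union]
    tauto

lemma card_filter_layer_forall_true_mul_descFactorial (k : ℕ) (S : Finset ι) :
    #{x ∈ layer ι k | ∀ i ∈ S, x i = true} * (Fintype.card ι).descFactorial #S =
      (Fintype.card ι).choose k * k.descFactorial #S := by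
  rcases le_or_gt #S k with hS | hS
  · rw [card_filter_layer_forall_true hS, choose_sub_mul_descFactorial hS]
  · suffices #{x ∈ layer ι k | ∀ i ∈ S, x i = true} = 0 by
      simp [this, Nat.descFactorial_eq_zero_iff_lt.mpr hS]
    refine card_eq_zero.mpr (filter_eq_empty_iff.mpr fun x hx hxS => ?_)
    have : #S ≤ wt x := card_le_card fun i hi => by simpa using hxS i hi
    rw [mem_layer] at hx
    omega

lemma card_layer (k : ℕ) : #(layer ι k) = (Fintype.card ι).choose k := by
  simpa using card_filter_layer_forall_true (ι := ι) (k := k) (S := ∅) (by simp)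

end Weight

lemma evalB_monomial {ι : Type*} (m : ι →₀ ℕ) (c : ℝ) (x : ι → Bool) :
    evalB (MvPolynomial.monomial m c) x = if ∀ i ∈ m.support, x i = true then c else 0 := by
  classical
  rw [evalB, MvPolynomial.eval_monomial, Finsupp.prod]
  split_ifs with h
  · rw [prod_eq_one fun i hi => by simp [h i hi, bval], mul_one]
  · push Not at h
    obtain ⟨i, hi, hxi⟩ := h
    rw [prod_eq_zero hi (by simp [bval, hxi, Finsupp.mem_support_iff.mp hi]), mul_zero]

lemma evalB_sum {ι κ : Type*} (s : Finset κ) (q : κ → MvPolynomial ι ℝ) (x : ι → Bool) :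
    evalB (∑ j ∈ s, q j) x = ∑ j ∈ s, evalB (q j) x :=
  map_sum _ _ _

section Symmetrization

variable {ι : Type*} [Fintype ι] [DecidableEq ι]

def IsSymmetrization (q : MvPolynomial ι ℝ) (Q : ℝ[X]) : Prop :=
  ∀ k, ((Fintype.card ι).choose k : ℝ) * Q.eval (k : ℝ) = ∑ x ∈ layer ι k, evalB q x

lemma isSymmetrization_monomial (m : ι →₀ ℕ) (c : ℝ) :
    IsSymmetrization (MvPolynomial.monomial m c)
      ((c / (Fintype.card ι).descFactorial #m.support) • descPochhammer ℝ #m.support) := by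
  intro k
  have hD : ((Fintype.card ι).descFactorial #m.support : ℝ) ≠ 0 := by
    exact_mod_cast (Nat.descFactorial_pos.mpr (card_le_univ _)).ne'
  have hcard : (#{x ∈ layer ι k | ∀ i ∈ m.support, x i = true} : ℝ) *
      (Fintype.card ι).descFactorial #m.support =
        (Fintype.card ι).choose k * k.descFactorial #m.support := by
    exact_mod_cast card_filter_layer_forall_true_mul_descFactorial k m.support
  have hsum : ∑ x ∈ layer ι k, evalB (MvPolynomial.monomial m c) x =
      c * #{x ∈ layer ι k | ∀ i ∈ m.support, x i = true} := by
    simp [evalB_monomial, sum_ite, mul_comm]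
  rw [hsum, eval_smul, descPochhammer_eval_eq_descFactorial, smul_eq_mul]
  field_simp
  linear_combination -c * hcard

lemma IsSymmetrization.sum {κ : Type*} {s : Finset κ} {q : κ → MvPolynomial ι ℝ}
    {Q : κ → ℝ[X]} (hQ : ∀ j ∈ s, IsSymmetrization (q j) (Q j)) :
    IsSymmetrization (∑ j ∈ s, q j) (∑ j ∈ s, Q j) := fun k => by
  simp only [evalB_sum, eval_finsetSum, mul_sum]
  rw [sum_comm]
  exact sum_congr rfl fun j hj => hQ j hj k

theorem exists_isSymmetrization (q : MvPolynomial ι ℝ) :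
    ∃ Q : ℝ[X], Q.natDegree ≤ q.totalDegree ∧ IsSymmetrization q Q := by
  set Q := fun m : ι →₀ ℕ =>
    (q.coeff m / (Fintype.card ι).descFactorial #m.support) • descPochhammer ℝ #m.support
  refine ⟨∑ m ∈ q.support, Q m, natDegree_sum_le_of_forall_le _ _ fun m hm => ?_, ?_⟩
  · calc (Q m).natDegree ≤ (descPochhammer ℝ #m.support).natDegree := natDegree_smul_le _ _
      _ = #m.support := descPochhammer_natDegree _ _
      _ ≤ q.totalDegree := (card_support_le_sum m).trans (MvPolynomial.le_totalDegree hm)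
  · nth_rewrite 1 [q.as_sum]
    exact IsSymmetrization.sum fun m _ => isSymmetrization_monomial m _

namespace IsSymmetrization

variable {q : MvPolynomial ι ℝ} {Q : ℝ[X]} {k : ℕ} {c : ℝ}

lemma le_eval (hQ : IsSymmetrization q Q) (hk : k ≤ Fintype.card ι)
    (h : ∀ x ∈ layer ι k, c ≤ evalB q x) : c ≤ Q.eval (k : ℝ) := by
  have hpos : (0 : ℝ) < (Fintype.card ι).choose k := by exact_mod_cast Nat.choose_pos hk
  have := card_nsmul_le_sum _ _ _ h
  rw [card_layer, nsmul_eq_mul, ← hQ k] at this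
  exact le_of_mul_le_mul_left this hpos

lemma eval_le (hQ : IsSymmetrization q Q) (hk : k ≤ Fintype.card ι)
    (h : ∀ x ∈ layer ι k, evalB q x ≤ c) : Q.eval (k : ℝ) ≤ c := by
  have hpos : (0 : ℝ) < (Fintype.card ι).choose k := by exact_mod_cast Nat.choose_pos hk
  have := sum_le_card_nsmul _ _ _ h
  rw [card_layer, nsmul_eq_mul, ← hQ k] at this
  exact le_of_mul_le_mul_left this hpos

lemma eval_wt_sub_mul_eval_wt_sub_neg {p : MvPolynomial ι ℝ} {f : (ι → Bool) → Bool}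
    (hQ : IsSymmetrization (p ^ 2) Q) (hf : IsSymmF f) (hp : IsApproxNdet (1/3) f p)
    {x y : ι → Bool} (hxy : f x ≠ f y) :
    (Q.eval (wt x : ℝ) - 1/2) * (Q.eval (wt y : ℝ) - 1/2) < 0 := by
  have hsq : ∀ z, evalB (p ^ 2) z = evalB p z ^ 2 := fun z => map_pow _ _ _
  have hlayer : ∀ z, ∀ w ∈ layer ι (wt z), f w = f z := fun z w hw =>
    hf w z (mem_layer.mp hw)
  have hbounds : ∀ z, (f z = true → 1 ≤ Q.eval (wt z : ℝ)) ∧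
      (f z = false → Q.eval (wt z : ℝ) ≤ 1/9) := fun z =>
    ⟨fun hz => hQ.le_eval (wt_le_card z) fun w hw => by
      rw [hsq, one_le_sq_iff_one_le_abs]
      exact (hp w).2 (by rw [hlayer z w hw, hz]),
    fun hz => hQ.eval_le (wt_le_card z) fun w hw => by
      have := (hp w).1 (by rw [hlayer z w hw, hz])
      rw [hsq, ← sq_abs]
      nlinarith [abs_nonneg (evalB p w)]⟩
  cases hx : f x <;> cases hy : f y <;> simp_all only [ne_eq, not_true_eq_false]
  · nlinarith [(hbounds x).2 hx, (hbounds y).1 hy]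
  · nlinarith [(hbounds x).1 hx, (hbounds y).2 hy]

end IsSymmetrization

end Symmetrization

section Representation

variable {ι : Type*} [Fintype ι]

lemma evalB_prod_indicator (x y : ι → Bool) :
    evalB (∏ i, if x i then MvPolynomial.X i else 1 - MvPolynomial.X i) y =
      if x = y then 1 else 0 := by
  simp only [evalB, map_prod]
  split_ifs with hxy
  · subst hxy
    exact prod_eq_one fun i _ => by cases hx : x i <;> simp [hx, bval]
  · obtain ⟨i, hi⟩ := Function.ne_iff.mp hxy
    exact prod_eq_zero (mem_univ i) (by cases hx : x i <;> cases hy : y i <;> simp_all [bval])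

variable [DecidableEq ι]

lemma exists_evalB_eq_bval (f : (ι → Bool) → Bool) :
    ∃ p : MvPolynomial ι ℝ, ∀ x, evalB p x = bval (f x) := by
  refine ⟨∑ x with f x = true, ∏ i, if x i then MvPolynomial.X i else 1 - MvPolynomial.X i,
    fun y => ?_⟩
  simp only [evalB_sum, evalB_prod_indicator, sum_ite_eq', mem_filter, mem_univ, true_and]
  rfl

lemma exists_isApproxNdet_totalDegree_le_N13 (f : (ι → Bool) → Bool) :
    ∃ p : MvPolynomial ι ℝ, IsApproxNdet (1/3) f p ∧ p.totalDegree ≤ N13 f := by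
  obtain ⟨p, hp⟩ := exists_evalB_eq_bval f
  refine Nat.sInf_mem (s := {d | ∃ p : MvPolynomial ι ℝ, IsApproxNdet (1/3) f p ∧
    p.totalDegree ≤ d}) ⟨p.totalDegree, p, fun x => ⟨fun hx => ?_, fun hx => ?_⟩, le_rfl⟩ <;>
    simp [hp, hx, bval]

end Representation

lemma exists_mem_Ioo_eq_zero_of_mul_neg {f : ℝ → ℝ} {a b : ℝ} (hab : a ≤ b)
    (hf : ContinuousOn f (Set.Icc a b)) (h : f a * f b < 0) : ∃ r ∈ Set.Ioo a b, f r = 0 := by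
  rcases mul_neg_iff.mp h with ⟨ha, hb⟩ | ⟨ha, hb⟩
  · exact intermediate_value_Ioo' hab hf ⟨hb, ha⟩
  · exact intermediate_value_Ioo hab hf ⟨ha, hb⟩

theorem card_le_natDegree_of_eval_mul_eval_succ_neg (g : ℝ[X]) (T : Finset ℕ)
    (h : ∀ t ∈ T, g.eval (t : ℝ) * g.eval ((t : ℝ) + 1) < 0) : #T ≤ g.natDegree := by
  by_cases hg : g = 0
  · subst hg
    simp [eq_empty_of_forall_notMem fun t ht => by simpa using h t ht]
  have hroot : ∀ t ∈ T, ∃ r ∈ Set.Ioo (t : ℝ) (t + 1), g.IsRoot r := fun t ht =>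
    exists_mem_Ioo_eq_zero_of_mul_neg (by linarith) g.continuous.continuousOn (h t ht)
  choose! ρ hρI hρ using hroot
  have hfloor : Set.LeftInvOn Nat.floor ρ T := fun t ht =>
    (Nat.floor_eq_iff (by linarith [(hρI t ht).1, t.cast_nonneg (α := ℝ)])).mpr
      ⟨(hρI t ht).1.le, (hρI t ht).2⟩
  calc #T ≤ #g.roots.toFinset :=
        card_le_card_of_injOn ρ (fun t ht => by simpa [hg] using hρ t ht) hfloor.injOn
    _ ≤ Multiset.card g.roots := Multiset.toFinset_card_le _
    _ ≤ g.natDegree := card_roots' g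

/-- symmetric functions: `N(f) ≥ alt(f)/2`. -/
theorem stmt11 {n : ℕ} (f : (Fin n → Bool) → Bool) (hf : IsSymmF f) :
    altNum f ≤ 2 * N13 f := by
  obtain ⟨p, hp, hdeg⟩ := exists_isApproxNdet_totalDegree_le_N13 f
  obtain ⟨Q, hQdeg, hQ⟩ := exists_isSymmetrization (p ^ 2)
  refine csSup_le' ?_
  rintro _ ⟨P, hP, rfl⟩
  calc pathAlt f P ≤ (Q - Polynomial.C (1/2)).natDegree :=
        card_le_natDegree_of_eval_mul_eval_succ_neg _ _ fun t ht => ?_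
    _ ≤ Q.natDegree := natDegree_sub_C.le
    _ ≤ (p ^ 2).totalDegree := hQdeg
    _ ≤ 2 * N13 f := (MvPolynomial.totalDegree_pow p 2).trans (by omega)
  obtain ⟨ht, hft⟩ := mem_filter.mp ht
  have hsign := hQ.eval_wt_sub_mul_eval_wt_sub_neg hf hp hft
  rw [hP.wt_eq (mem_range.mp ht).le, hP.wt_eq (mem_range.mp ht)] at hsign
  simpa using hsign
end

section
/- Let f : {0,1}^n → {0,1} with f(x) = 0 for some input x, and let B ⊆ [n] be a minimal sensitive block of x (f(x^B) = 1 but f(x^{B'}) = 0 for every proper subset B' ⊂ B). Then N(f) ≥ Ω(√|B|). -/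
open MvPolynomial

/-!
Scale an optimal non-deterministic polynomial `p` for `f` so that it takes the value `1` at
`x^B`, and multilinearize it. Its expectation under the random input that flips each coordinate
of `B` independently with probability `t` is a univariate polynomial `G` with `deg G ≤ deg p`
(Minsky–Papert symmetrization). Minimality of `B` gives `G 1 = 1` and
`|G t| ≤ 1/3 + 2/3 t^|B|` on `[0, 1]`, so `|G| ≤ 2/3` on `[0, 1 - Θ(1/|B|)]` while `G` reaches
`1` at distance `Θ(1/|B|)` from that interval. Chebyshev's extremal bound
`P (cosh u) ≤ max_{[-1, 1]} |P| * cosh (deg P * u)` then forces `deg G = Ω(√|B|)`.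
-/

open scoped Polynomial

section Chebyshev

open Polynomial Real

lemma eval_cosh_le_mul_cosh_of_abs_le {P : ℝ[X]} {D : ℕ} {M : ℝ} (hM : 0 < M)
    (hdeg : P.natDegree ≤ D) (hbound : ∀ s ∈ Set.Icc (-1 : ℝ) 1, |P.eval s| ≤ M)
    (u : ℝ) :
    P.eval (cosh u) ≤ M * cosh (D * u) := by
  have h := Chebyshev.eval_iterate_derivative_le_of_forall_abs_le_one (k := 0) (n := D)
    (P := Polynomial.C M⁻¹ * P) (one_le_cosh u)
    ((degree_C_mul (inv_ne_zero hM.ne')).trans_le (degree_le_of_natDegree_le hdeg))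
    fun s hs => by
      rw [Polynomial.eval_mul, Polynomial.eval_C, abs_mul, abs_inv, abs_of_pos hM,
        inv_mul_le_iff₀ hM, mul_one]
      exact hbound s hs
  rw [Function.iterate_zero, id, id, Polynomial.eval_mul, Polynomial.eval_C,
    Chebyshev.T_real_cosh, inv_mul_le_iff₀ hM] at h
  exact_mod_cast h

lemma one_add_sq_div_two_le_cosh {u : ℝ} (hu : 0 ≤ u) : 1 + u ^ 2 / 2 ≤ cosh u := by
  have hsinh : u / 2 ≤ sinh (u / 2) := self_le_sinh_iff.mpr (by positivity)
  have hcosh : cosh u = 1 + 2 * sinh (u / 2) ^ 2 := by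
    rw [← mul_div_cancel₀ u two_ne_zero, cosh_two_mul, cosh_sq]; ring_nf
  nlinarith

lemma cosh_lt_three_halves {z : ℝ} (hz : |z| < 1 / 2) : cosh z < 3 / 2 := by
  have hsq : z ^ 2 / 2 < 1 / 8 := by nlinarith [sq_abs z, abs_nonneg z]
  calc cosh z ≤ exp (z ^ 2 / 2) := cosh_le_exp_half_sq z
    _ < exp (1 / 8) := exp_lt_exp.mpr hsq
    _ < 1 / (1 - 1 / 8) := exp_bound_div_one_sub_of_interval' (by norm_num) (by norm_num)
    _ < 3 / 2 := by norm_num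

lemma pow_le_half_of_mul_one_add_inv_le_one {a : ℝ} {m : ℕ} (ha : 0 ≤ a) (hm : 0 < m)
    (h : a * (1 + (m : ℝ)⁻¹) ≤ 1) : a ^ m ≤ 1 / 2 := by
  have hinv : (0 : ℝ) ≤ (m : ℝ)⁻¹ := by positivity
  have hbernoulli : 2 ≤ (1 + (m : ℝ)⁻¹) ^ m := by
    have := one_add_mul_le_pow (a := (m : ℝ)⁻¹) (by linarith) m
    rw [mul_inv_cancel₀ (by positivity)] at this
    linarith
  have hprod : a ^ m * (1 + (m : ℝ)⁻¹) ^ m ≤ 1 := by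
    rw [← mul_pow]; exact pow_le_one₀ (by positivity) h
  nlinarith [pow_nonneg ha m]

lemma three_halves_le_cosh_natDegree_mul {G : ℝ[X]} {m : ℕ} (hm : 0 < m) (hG1 : G.eval 1 = 1)
    (hG : ∀ t ∈ Set.Icc (0 : ℝ) 1, |G.eval t| ≤ 1 / 3 + 2 / 3 * t ^ m) {u : ℝ}
    (hu : 1 + 2 / m ≤ cosh u) : 3 / 2 ≤ cosh (G.natDegree * u) := by
  set a := 2 / (1 + cosh u) with ha
  have ha0 : 0 < a := by positivity
  have ha1 : a * (1 + (m : ℝ)⁻¹) ≤ 1 := by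
    rw [ha, div_mul_eq_mul_div, div_le_one (by positivity)]
    have : 2 / (m : ℝ) = 2 * (m : ℝ)⁻¹ := div_eq_mul_inv _ _
    linarith
  -- `P s = G (a (s + 1) / 2)` rescales `[0, a]` to `[-1, 1]` and sends `cosh u` to `1`
  set P := G.comp (Polynomial.C (a / 2) * (Polynomial.X + 1)) with hP
  have hPeval (s : ℝ) : P.eval s = G.eval (a / 2 * (s + 1)) := by simp [hP]
  have hPdeg : P.natDegree ≤ G.natDegree := by
    have hlin : (Polynomial.C (a / 2) * (Polynomial.X + 1)).natDegree ≤ 1 := by compute_degree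
    simpa using natDegree_comp_le.trans (Nat.mul_le_mul_left G.natDegree hlin)
  have hP1 : P.eval (cosh u) = 1 := by
    rw [hPeval]; convert hG1 using 2; rw [ha]; field_simp; ring
  have hPbound : ∀ s ∈ Set.Icc (-1 : ℝ) 1, |P.eval s| ≤ 2 / 3 := by
    rintro s ⟨hs1, hs2⟩
    have ht0 : 0 ≤ a / 2 * (s + 1) := by nlinarith
    have hta : a / 2 * (s + 1) ≤ a := by nlinarith
    have ha' : a ≤ 1 := by nlinarith [inv_nonneg.mpr (m.cast_nonneg (α := ℝ))]
    have hpow : (a / 2 * (s + 1)) ^ m ≤ 1 / 2 :=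
      (pow_le_pow_left₀ ht0 hta m).trans (pow_le_half_of_mul_one_add_inv_le_one ha0.le hm ha1)
    rw [hPeval]
    linarith [hG _ ⟨ht0, hta.trans ha'⟩]
  have := eval_cosh_le_mul_cosh_of_abs_le (by norm_num) hPdeg hPbound u
  linarith

lemma sqrt_le_four_mul_natDegree {G : ℝ[X]} {m : ℕ} (hG1 : G.eval 1 = 1)
    (hG : ∀ t ∈ Set.Icc (0 : ℝ) 1, |G.eval t| ≤ 1 / 3 + 2 / 3 * t ^ m) :
    √m ≤ 4 * G.natDegree := by
  rcases Nat.eq_zero_or_pos m with rfl | hm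
  · simp
  have hsqrt : 0 < √(m : ℝ) := by positivity
  set u := 2 / √(m : ℝ) with hu
  have hu2 : u ^ 2 / 2 = 2 / m := by
    rw [div_pow, sq_sqrt (by positivity)]; ring
  have hgrowth := three_halves_le_cosh_natDegree_mul hm hG1 hG
    (hu2 ▸ one_add_sq_div_two_le_cosh (by positivity))
  by_contra! hlt
  refine (cosh_lt_three_halves ?_).not_ge hgrowth
  rw [abs_of_nonneg (by positivity), hu, mul_div_assoc', div_lt_iff₀ hsqrt]
  linarith

end Chebyshev

section BooleanCube

variable {ι : Type*}

lemma bval_pow {b : Bool} {k : ℕ} (hk : k ≠ 0) : bval b ^ k = bval b := by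
  cases b <;> simp [bval, zero_pow hk]

lemma evalB_prod_ite_X [Fintype ι] (y z : ι → Bool) :
    evalB (∏ i, if y i then X i else 1 - X i : MvPolynomial ι ℝ) z
      = if y = z then 1 else 0 := by
  rw [evalB, map_prod]
  split_ifs with h
  · subst h
    exact Finset.prod_eq_one fun i _ => by cases hy : y i <;> simp [hy, bval]
  · obtain ⟨i, hi⟩ := Function.ne_iff.mp h
    refine Finset.prod_eq_zero (Finset.mem_univ i) ?_
    cases hy : y i <;> cases hz : z i <;> simp_all [bval]

lemma exists_evalB_eq [Fintype ι] (g : (ι → Bool) → ℝ) :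
    ∃ p : MvPolynomial ι ℝ, ∀ z, evalB p z = g z := by
  classical
  refine ⟨∑ y, C (g y) * ∏ i, (if y i then X i else 1 - X i), fun z => ?_⟩
  have hterm (y : ι → Bool) : evalB (C (g y) * ∏ i, (if y i then X i else 1 - X i)) z
      = if y = z then g y else 0 := by
    rw [evalB, map_mul, eval_C, ← evalB, evalB_prod_ite_X, mul_ite, mul_one, mul_zero]
  simp only [evalB, map_sum] at hterm ⊢
  simp [hterm]

lemma exists_isApproxNdet_totalDegree_le_approxNdeg [Fintype ι] {ε : ℝ} (hε : 0 ≤ ε)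
    (f : (ι → Bool) → Bool) :
    ∃ p, IsApproxNdet ε f p ∧ p.totalDegree ≤ approxNdeg ε f := by
  obtain ⟨p, hp⟩ := exists_evalB_eq fun z => bval (f z)
  have hpf : IsApproxNdet ε f p := fun z =>
    ⟨fun h => by simp [hp, h, bval, hε], fun h => by simp [hp, h, bval]⟩
  exact Nat.sInf_mem (s := {d | ∃ p, IsApproxNdet ε f p ∧ p.totalDegree ≤ d})
    ⟨_, p, hpf, le_rfl⟩

end BooleanCube

namespace MvPolynomial

variable {ι R : Type*}

section CommSemiring

variable [CommSemiring R]

def IsMultilinear (q : MvPolynomial ι R) : Prop := ∀ d ∈ q.support, ∀ i, d i ≤ 1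

lemma IsMultilinear.smul {q : MvPolynomial ι R} (hq : q.IsMultilinear) (c : R) :
    (c • q).IsMultilinear :=
  fun d hd => hq d (support_smul hd)

noncomputable def multilinearize (p : MvPolynomial ι R) : MvPolynomial ι R :=
  ∑ d ∈ p.support, monomial (d.mapRange (min · 1) (by simp)) (coeff d p)

lemma isMultilinear_multilinearize (p : MvPolynomial ι R) : p.multilinearize.IsMultilinear := by
  classical
  intro d hd i
  obtain ⟨s, -, hs⟩ := Finset.mem_biUnion.mp (support_sum hd)
  rw [Finset.mem_singleton.mp (support_monomial_subset hs)]
  exact min_le_right _ _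

lemma totalDegree_multilinearize_le (p : MvPolynomial ι R) :
    p.multilinearize.totalDegree ≤ p.totalDegree := by
  refine (totalDegree_finsetSum _ _).trans (Finset.sup_le fun d hd => ?_)
  refine (totalDegree_monomial_le _ _).trans
    ((Finsupp.sum_mapRange_index (by simp)).trans_le ?_)
  exact (Finset.sum_le_sum fun i _ => min_le_left _ _).trans (le_totalDegree hd)

lemma polynomial_eval_aeval (σ : ι → R[X]) (q : MvPolynomial ι R) (t : R) :
    (aeval σ q).eval t = eval (fun i => (σ i).eval t) q := by
  rw [← Polynomial.coe_aeval_eq_eval, ← AlgHom.comp_apply, comp_aeval, ← coe_aeval_eq_eval]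
  rfl

lemma natDegree_aeval_le_totalDegree {σ : ι → R[X]} (hσ : ∀ i, (σ i).natDegree ≤ 1)
    (q : MvPolynomial ι R) : (aeval σ q).natDegree ≤ q.totalDegree := by
  conv_lhs => rw [q.as_sum, map_sum]
  refine Polynomial.natDegree_sum_le_of_forall_le _ _ fun d hd => ?_
  rw [aeval_monomial]
  refine (Polynomial.natDegree_C_mul_le _ _).trans
    ((Polynomial.natDegree_prod_le _ _).trans (le_trans ?_ (le_totalDegree hd)))
  refine Finset.sum_le_sum fun i _ => Polynomial.natDegree_pow_le.trans ?_
  simpa using Nat.mul_le_mul_left (d i) (hσ i)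

end CommSemiring

lemma IsMultilinear.eval_update_lerp [CommRing R] [DecidableEq ι] {q : MvPolynomial ι R}
    (hq : q.IsMultilinear) (v : ι → R) (i : ι) (a b t : R) :
    eval (Function.update v i ((1 - t) * a + t * b)) q
      = (1 - t) * eval (Function.update v i a) q + t * eval (Function.update v i b) q := by
  simp only [eval_eq, Finset.mul_sum, ← Finset.sum_add_distrib]
  refine Finset.sum_congr rfl fun d hd => ?_
  have hsplit (c : R) : ∏ j ∈ d.support, Function.update v i c j ^ d j
      = c ^ d i * ∏ j ∈ d.support.erase i, v j ^ d j := by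
    by_cases hi : i ∈ d.support
    · rw [← Finset.mul_prod_erase _ _ hi, Function.update_self]
      congr 1
      exact Finset.prod_congr rfl fun j hj => by
        rw [Function.update_of_ne (Finset.ne_of_mem_erase hj)]
    · rw [Finsupp.notMem_support_iff.mp hi, pow_zero, one_mul, Finset.erase_eq_of_notMem hi]
      exact Finset.prod_congr rfl fun j hj => by
        rw [Function.update_of_ne (by rintro rfl; exact hi hj)]
  simp only [hsplit]
  rcases Nat.le_one_iff_eq_zero_or_eq_one.mp (hq d hd i) with h | h <;> rw [h] <;> ring

end MvPolynomial

lemma evalB_multilinearize {ι : Type*} (p : MvPolynomial ι ℝ) (z : ι → Bool) :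
    evalB p.multilinearize z = evalB p z := by
  rw [evalB, evalB, multilinearize, map_sum, eval_eq _ p]
  refine Finset.sum_congr rfl fun d _ => ?_
  rw [eval_monomial, Finsupp.prod_mapRange_index (by simp)]
  congr 1
  refine Finset.prod_congr rfl fun i hi => ?_
  have hdi : d i ≠ 0 := Finsupp.mem_support_iff.mp hi
  change bval (z i) ^ min (d i) 1 = bval (z i) ^ d i
  rw [bval_pow (by omega), bval_pow hdi]

section BlockPath

variable {ι : Type*} [DecidableEq ι]

lemma flipB_empty (y : ι → Bool) : flipB y ∅ = y := by
  funext i; simp [flipB]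

lemma flipB_flipB_singleton {i : ι} {S : Finset ι} (hi : i ∉ S) (y : ι → Bool) :
    flipB (flipB y {i}) S = flipB y (insert i S) := by
  funext j
  by_cases hj : j = i
  · subst hj; simp [flipB, hi]
  · by_cases hjS : j ∈ S <;> simp [flipB, hj, hjS]

/-- Evaluated at `t`, this is the mean of the random input obtained from `y` by flipping each
coordinate of `B` independently with probability `t`. -/
noncomputable def blockPath (B : Finset ι) (y : ι → Bool) (i : ι) : ℝ[X] :=
  if i ∈ B then
    Polynomial.C (bval (y i)) * (1 - Polynomial.X) + Polynomial.C (bval (!y i)) * Polynomial.X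
  else Polynomial.C (bval (y i))

lemma natDegree_blockPath_le (B : Finset ι) (y : ι → Bool) (i : ι) :
    (blockPath B y i).natDegree ≤ 1 := by
  unfold blockPath
  split_ifs
  · compute_degree
  · simp

lemma eval_blockPath_insert {B : Finset ι} {i : ι} (hi : i ∉ B) (y : ι → Bool) (t : ℝ) :
    (fun j => (blockPath (insert i B) y j).eval t)
      = Function.update (fun j => (blockPath B y j).eval t) i
          ((1 - t) * bval (y i) + t * bval (!y i)) := by
  funext j
  by_cases hj : j = i
  · subst hj; simp [blockPath]; ring
  · simp [blockPath, hj]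

lemma eval_blockPath_flipB_singleton {B : Finset ι} {i : ι} (hi : i ∉ B) (y : ι → Bool)
    (t : ℝ) :
    (fun j => (blockPath B (flipB y {i}) j).eval t)
      = Function.update (fun j => (blockPath B y j).eval t) i (bval (!y i)) := by
  funext j
  by_cases hj : j = i
  · subst hj; simp [blockPath, flipB, hi]
  · simp [blockPath, flipB, hj]

lemma MvPolynomial.IsMultilinear.eval_blockPath {q : MvPolynomial ι ℝ} (hq : q.IsMultilinear)
    (t : ℝ) (B : Finset ι) (y : ι → Bool) :
    eval (fun i => (blockPath B y i).eval t) q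
      = ∑ S ∈ B.powerset, t ^ S.card * (1 - t) ^ (B.card - S.card) * evalB q (flipB y S) := by
  induction B using Finset.induction_on generalizing y with
  | empty => simp [blockPath, flipB_empty, evalB]
  | insert i B hi ih =>
    have hfix : Function.update (fun j => (blockPath B y j).eval t) i (bval (y i))
        = fun j => (blockPath B y j).eval t := by
      rw [Function.update_eq_self_iff]; simp [blockPath, hi]
    rw [eval_blockPath_insert hi, hq.eval_update_lerp, hfix, ← eval_blockPath_flipB_singleton hi,
      ih, ih, Finset.sum_powerset_insert hi, Finset.mul_sum, Finset.mul_sum,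
      Finset.card_insert_of_notMem hi]
    congr 1
    · refine Finset.sum_congr rfl fun S hS => ?_
      have hSB := Finset.card_le_card (Finset.mem_powerset.mp hS)
      rw [show B.card + 1 - S.card = B.card - S.card + 1 by omega, pow_succ]
      ring
    · refine Finset.sum_congr rfl fun S hS => ?_
      have hiS : i ∉ S := fun h => hi (Finset.mem_powerset.mp hS h)
      rw [Finset.card_insert_of_notMem hiS, Nat.add_sub_add_right, pow_succ,
        flipB_flipB_singleton hiS]
      ring

lemma MvPolynomial.IsMultilinear.exists_natDegree_le_eval_eq_sum_powerset
    {q : MvPolynomial ι ℝ} (hq : q.IsMultilinear) (B : Finset ι) (y : ι → Bool) :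
    ∃ G : ℝ[X], G.natDegree ≤ q.totalDegree ∧ ∀ t, G.eval t
      = ∑ S ∈ B.powerset, t ^ S.card * (1 - t) ^ (B.card - S.card) * evalB q (flipB y S) :=
  ⟨aeval (blockPath B y) q, natDegree_aeval_le_totalDegree (natDegree_blockPath_le B y) q,
    fun t => by rw [polynomial_eval_aeval, hq.eval_blockPath]⟩

end BlockPath

lemma abs_sum_powerset_le {ι : Type*} {B : Finset ι} {v : Finset ι → ℝ} (hvB : v B = 1)
    (hv : ∀ S ⊂ B, |v S| ≤ 1 / 3) {t : ℝ} (ht : t ∈ Set.Icc (0 : ℝ) 1) :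
    |∑ S ∈ B.powerset, t ^ S.card * (1 - t) ^ (B.card - S.card) * v S|
      ≤ 1 / 3 + 2 / 3 * t ^ B.card := by
  classical
  set w : Finset ι → ℝ := fun S => t ^ S.card * (1 - t) ^ (B.card - S.card) with hw
  have hw0 (S : Finset ι) : 0 ≤ w S :=
    mul_nonneg (pow_nonneg ht.1 _) (pow_nonneg (by linarith [ht.2]) _)
  have hB := Finset.mem_powerset_self B
  have hsum : ∑ S ∈ B.powerset.erase B, w S = 1 - t ^ B.card := by
    have := Finset.sum_pow_mul_eq_add_pow t (1 - t) B
    rw [← Finset.sum_erase_add _ _ hB, add_sub_cancel, one_pow] at this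
    simp only [hw, Nat.sub_self, pow_zero, mul_one] at this ⊢
    linarith
  have hrest : |∑ S ∈ B.powerset.erase B, w S * v S|
      ≤ ∑ S ∈ B.powerset.erase B, w S * (1 / 3) := by
    refine (Finset.abs_sum_le_sum_abs _ _).trans (Finset.sum_le_sum fun S hS => ?_)
    obtain ⟨hSB, hS⟩ := Finset.mem_erase.mp hS
    rw [abs_mul, abs_of_nonneg (hw0 S)]
    exact mul_le_mul_of_nonneg_left (hv S (Finset.ssubset_iff_subset_ne.mpr
      ⟨Finset.mem_powerset.mp hS, hSB⟩)) (hw0 S)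
  rw [← Finset.sum_mul, hsum] at hrest
  rw [← Finset.sum_erase_add _ _ hB, hvB]
  simp only [hw, Nat.sub_self, pow_zero, mul_one] at hrest ⊢
  have htri := abs_add_le
    (∑ S ∈ B.powerset.erase B, t ^ S.card * (1 - t) ^ (B.card - S.card) * v S) (t ^ B.card)
  rw [abs_of_nonneg (pow_nonneg ht.1 _)] at htri
  linarith

lemma exists_polynomial_of_minimal_sensitive_block {ι : Type*} [DecidableEq ι]
    {f : (ι → Bool) → Bool} {p : MvPolynomial ι ℝ} (hp : IsApproxNdet (1 / 3) f p)
    {x : ι → Bool} {B : Finset ι} (hfB : f (flipB x B) = true)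
    (hmin : ∀ B' ⊂ B, f (flipB x B') = false) :
    ∃ G : ℝ[X], G.natDegree ≤ p.totalDegree ∧ G.eval 1 = 1 ∧
      ∀ t ∈ Set.Icc (0 : ℝ) 1, |G.eval t| ≤ 1 / 3 + 2 / 3 * t ^ B.card := by
  set w := evalB p (flipB x B)
  have hw : 1 ≤ |w| := (hp _).2 hfB
  have hw0 : w ≠ 0 := by rintro h; simp [h] at hw; linarith
  set q := w⁻¹ • p.multilinearize
  have hq (z : ι → Bool) : evalB q z = w⁻¹ * evalB p z := by
    rw [← evalB_multilinearize p z]; simp [q, evalB]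
  have hqB : evalB q (flipB x B) = 1 := by rw [hq, inv_mul_cancel₀ hw0]
  have hqS (S : Finset ι) (hS : S ⊂ B) : |evalB q (flipB x S)| ≤ 1 / 3 := by
    rw [hq, abs_mul, abs_inv]
    calc |w|⁻¹ * |evalB p (flipB x S)| ≤ 1 * (1 / 3) :=
          mul_le_mul (inv_le_one_of_one_le₀ hw) ((hp _).1 (hmin S hS)) (abs_nonneg _) zero_le_one
      _ = 1 / 3 := one_mul _
  obtain ⟨G, hGdeg, hG⟩ :=
    ((isMultilinear_multilinearize p).smul w⁻¹).exists_natDegree_le_eval_eq_sum_powerset B x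
  refine ⟨G, hGdeg.trans ((totalDegree_smul_le _ _).trans (totalDegree_multilinearize_le p)),
    ?_, fun t ht => hG t ▸ abs_sum_powerset_le hqB hqS ht⟩
  rw [hG, Finset.sum_eq_single_of_mem B (Finset.mem_powerset_self B), hqB]
  · simp
  · intro S hS hSB
    have := Finset.card_lt_card
      (Finset.ssubset_iff_subset_ne.mpr ⟨Finset.mem_powerset.mp hS, hSB⟩)
    rw [sub_self, zero_pow (by omega), mul_zero, zero_mul]

/-- if `B` is a minimal sensitive block of a `0`-input `x`,
then `N(f) ≥ Ω(√|B|)`. -/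
theorem stmt16 :
    ∃ c : ℝ, 0 < c ∧
      ∀ (n : ℕ) (f : (Fin n → Bool) → Bool) (x : Fin n → Bool) (B : Finset (Fin n)),
        f x = false → f (flipB x B) = true →
        (∀ B' ⊂ B, f (flipB x B') = false) →
        c * Real.sqrt (B.card : ℝ) ≤ (N13 f : ℝ) := by
  refine ⟨1 / 4, by norm_num, fun n f x B _ hfB hmin => ?_⟩
  obtain ⟨p, hp, hpdeg⟩ :=
    exists_isApproxNdet_totalDegree_le_approxNdeg (ε := 1 / 3) (by norm_num) f
  obtain ⟨G, hGdeg, hG1, hGbound⟩ := exists_polynomial_of_minimal_sensitive_block hp hfB hmin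
  have hsqrt := sqrt_le_four_mul_natDegree hG1 hGbound
  have hdeg : (G.natDegree : ℝ) ≤ N13 f := by exact_mod_cast hGdeg.trans hpdeg
  linarith
end
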